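/- For every n ≥ 1, the total number of ascents over all Schröder paths of semilength n equals the n-th coefficient of (x^2 - 5x + 2)/(2 sqrt(1 - 6x + x^2)) plus the n-th coefficient of (x+2)/2. -/

import Mathlib

open PowerSeries

inductive Step : Type
  | U | D | F
  deriving DecidableEq

def Step.len : Step → ℕ
  | .U => 1 | .D => 1 | .F => 2

def Step.alt : Step → ℤ
  | .U => 1 | .D => -1 | .F => 0

/-- Total length (x-displacement) of a path. -/
def pathLen (w : List Step) : ℕ := (w.map Step.len).sum

/-- Final altitude (y-displacement) of a path. -/
def pathAlt (w : List Step) : ℤ := (w.map Step.alt).sum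

/-- A Schröder path of semilength `n`: from (0,0) to (2n,0), never below the x-axis. -/
def IsSchroeder (n : ℕ) (w : List Step) : Prop :=
  pathLen w = 2 * n ∧ pathAlt w = 0 ∧ ∀ p : List Step, p <+: w → 0 ≤ pathAlt p

/-- `w` avoids the consecutive pattern `UF`. -/
def AvoidsUF (w : List Step) : Prop := ¬ ([Step.U, Step.F] <:+: w)

/-- Number of ascents: maximal nonempty runs of consecutive up-steps,
counted via their last up-step. -/
def ascents (w : List Step) : ℕ :=
  (List.range w.length).countP
    (fun i => decide (w[i]? = some Step.U ∧ w[i+1]? ≠ some Step.U))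

noncomputable def schroederCount (n : ℕ) : ℕ :=
  Nat.card {w : List Step // IsSchroeder n w}

noncomputable def schroederUFCount (n : ℕ) : ℕ :=
  Nat.card {w : List Step // IsSchroeder n w ∧ AvoidsUF w}

noncomputable def totalAscents (n : ℕ) : ℕ :=
  ∑ᶠ w ∈ {w : List Step | IsSchroeder n w}, ascents w

noncomputable def totalAscentsSq (n : ℕ) : ℕ :=
  ∑ᶠ w ∈ {w : List Step | IsSchroeder n w}, (ascents w) ^ 2

noncomputable def ascCount (n k : ℕ) : ℕ :=
  Nat.card {w : List Step // IsSchroeder n w ∧ ascents w = k}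

noncomputable def vv : PowerSeries (Polynomial ℚ) :=
  PowerSeries.C Polynomial.X

/-!
Cutting a Schröder path at its first return to the axis writes it uniquely as `F q` or
`U p D q` with `p`, `q` Schröder paths. For the counting series `r` this gives
`X r² + (X - 1) r + 1 = 0`, whose discriminant is `1 - 6X + X²`; so `s = 1 - X - 2 X r`.
The leading `U` of `U p D q` starts a new ascent exactly when `p` does not start with `U`,
so the ascent series `A` satisfies `A = X A + X (1 + X r + A) r + X r A`, i.e.
`s A = X r (1 + X r)`. Eliminating `r` gives `2 s A = X² - 5X + 2 - (2 - X) s`,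
hence `A = D - 1 + X / 2`.
-/

open Finset

section Prefix

variable {α : Type*} {P : List α → Prop}

lemma List.forall_prefix_cons {x : α} {l : List α} :
    (∀ pre, pre <+: x :: l → P pre) ↔ P [] ∧ ∀ pre, pre <+: l → P (x :: pre) := by
  constructor
  · exact fun h => ⟨h [] List.nil_prefix,
      fun pre hpre => h _ (List.cons_prefix_cons.mpr ⟨rfl, hpre⟩)⟩
  · rintro ⟨hnil, hcons⟩ pre hpre
    rcases List.prefix_cons_iff.mp hpre with rfl | ⟨t, rfl, ht⟩
    exacts [hnil, hcons t ht]

lemma List.forall_prefix_append {a b : List α} :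
    (∀ pre, pre <+: a ++ b → P pre) ↔
      (∀ pre, pre <+: a → P pre) ∧ ∀ pre, pre <+: b → P (a ++ pre) := by
  induction a generalizing P with
  | nil => simpa [List.prefix_nil] using fun h => h [] List.nil_prefix
  | cons x a ih => simp only [List.cons_append, List.forall_prefix_cons, ih, and_assoc]

end Prefix

@[simp] lemma pathLen_nil : pathLen [] = 0 := rfl
@[simp] lemma pathAlt_nil : pathAlt [] = 0 := rfl
@[simp] lemma pathLen_cons (x : Step) (l : List Step) :
    pathLen (x :: l) = x.len + pathLen l := by simp [pathLen]
@[simp] lemma pathAlt_cons (x : Step) (l : List Step) :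
    pathAlt (x :: l) = x.alt + pathAlt l := by simp [pathAlt]
@[simp] lemma pathLen_append (a b : List Step) :
    pathLen (a ++ b) = pathLen a + pathLen b := by simp [pathLen]
@[simp] lemma pathAlt_append (a b : List Step) :
    pathAlt (a ++ b) = pathAlt a + pathAlt b := by simp [pathAlt]

lemma length_le_pathLen (w : List Step) : w.length ≤ pathLen w := by
  induction w with
  | nil => simp
  | cons x l ih => cases x <;> simp [Step.len] <;> omega

lemma even_pathLen_add_pathAlt (w : List Step) : Even ((pathLen w : ℤ) + pathAlt w) := by
  induction w with
  | nil => simp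
  | cons x l ih =>
    have hstep : Even ((x.len : ℤ) + x.alt) := by cases x <;> decide
    rw [show ((pathLen (x :: l) : ℤ) + pathAlt (x :: l)) =
        (pathLen l + pathAlt l) + (x.len + x.alt) by push_cast [pathLen_cons, pathAlt_cons]; ring]
    exact ih.add hstep

lemma even_pathLen_of_pathAlt_eq_zero {w : List Step} (h : pathAlt w = 0) :
    Even (pathLen w) := by
  simpa [h, Int.even_coe_nat] using even_pathLen_add_pathAlt w

instance : Fintype Step :=
  ⟨⟨{Step.U, Step.D, Step.F}, by decide⟩, fun x => by cases x <;> decide⟩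

lemma setOf_isSchroeder_finite (n : ℕ) : {w | IsSchroeder n w}.Finite :=
  (List.finite_length_le Step (2 * n)).subset fun w hw =>
    (length_le_pathLen w).trans_eq hw.1

noncomputable def schroederPaths (n : ℕ) : Finset (List Step) :=
  (setOf_isSchroeder_finite n).toFinset

@[simp] lemma mem_schroederPaths {n : ℕ} {w : List Step} :
    w ∈ schroederPaths n ↔ IsSchroeder n w := by
  simp [schroederPaths]

lemma schroederPaths_zero : schroederPaths 0 = {[]} := by
  ext w
  simp only [mem_schroederPaths, mem_singleton]
  constructor
  · rintro ⟨hlen, -, -⟩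
    cases w with
    | nil => rfl
    | cons x t => cases x <;> simp [Step.len] at hlen
  · rintro rfl
    exact ⟨rfl, rfl, fun p hp => by simp [List.prefix_nil.mp hp]⟩

lemma isSchroeder_F_cons {n : ℕ} {q : List Step} (hq : IsSchroeder n q) :
    IsSchroeder (n + 1) (Step.F :: q) := by
  obtain ⟨hlen, halt, hpre⟩ := hq
  refine ⟨by simp [hlen, Step.len]; ring, by simp [halt, Step.alt], ?_⟩
  rw [List.forall_prefix_cons]
  exact ⟨le_rfl, fun pre h => by simpa [Step.alt] using hpre pre h⟩

lemma isSchroeder_U_append_D {i j : ℕ} {p q : List Step}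
    (hp : IsSchroeder i p) (hq : IsSchroeder j q) :
    IsSchroeder (i + j + 1) (Step.U :: p ++ Step.D :: q) := by
  obtain ⟨hplen, hpalt, hppre⟩ := hp
  obtain ⟨hqlen, hqalt, hqpre⟩ := hq
  refine ⟨by simp [hplen, hqlen, Step.len]; ring, by simp [hpalt, hqalt, Step.alt], ?_⟩
  simp only [List.cons_append, List.forall_prefix_cons, List.forall_prefix_append]
  refine ⟨le_rfl, fun pre h => ?_, ?_, fun pre h => ?_⟩
  · simpa [Step.alt] using (hppre pre h).trans (by omega)
  · simp [hpalt, Step.alt]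
  · simpa [hpalt, Step.alt] using hqpre pre h

lemma exists_first_descent {t : List Step} {h : ℤ} (h0 : 0 ≤ h) (ht : h + pathAlt t < 0) :
    ∃ p q, t = p ++ Step.D :: q ∧ h + pathAlt p = 0 ∧
      ∀ pre, pre <+: p → 0 ≤ h + pathAlt pre := by
  induction t generalizing h with
  | nil => simp at ht; omega
  | cons x t ih =>
    by_cases hD : x = Step.D ∧ h = 0
    · obtain ⟨rfl, rfl⟩ := hD
      exact ⟨[], t, rfl, rfl, fun pre hpre => by simp [List.prefix_nil.mp hpre]⟩
    have hx : 0 ≤ h + x.alt := by cases x <;> simp [Step.alt] at hD ⊢ <;> omega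
    obtain ⟨p, q, rfl, hp, hpre⟩ := ih hx (by simp at ht; linarith)
    refine ⟨x :: p, q, rfl, by simp; linarith, List.forall_prefix_cons.mpr ⟨by simpa, ?_⟩⟩
    exact fun pre h' => by simpa [add_assoc] using hpre pre h'

lemma isSchroeder_succ_cases {n : ℕ} {w : List Step} (hw : IsSchroeder (n + 1) w) :
    (∃ q, IsSchroeder n q ∧ w = Step.F :: q) ∨
      ∃ i j p q, i + j = n ∧ IsSchroeder i p ∧ IsSchroeder j q ∧
        w = Step.U :: p ++ Step.D :: q := by
  obtain ⟨hlen, halt, hpre⟩ := hw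
  cases w with
  | nil => simp at hlen
  | cons x t =>
    rw [List.forall_prefix_cons] at hpre
    cases x with
    | D => simpa [Step.alt] using hpre.2 [] List.nil_prefix
    | F =>
      refine Or.inl ⟨t, ⟨?_, by simpa [Step.alt] using halt, fun pre h => ?_⟩, rfl⟩
      · simp [Step.len] at hlen; omega
      · simpa [Step.alt] using hpre.2 pre h
    | U =>
      obtain ⟨p, q, rfl, hpalt, hppre⟩ :=
        exists_first_descent (t := t) le_rfl (by simp [Step.alt] at halt ⊢; omega)
      simp only [zero_add] at hpalt hppre
      have hqalt : pathAlt q = 0 := by simpa [hpalt, Step.alt] using halt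
      have hqpre : ∀ pre, pre <+: q → 0 ≤ pathAlt pre := fun pre h => by
        simpa [hpalt, Step.alt] using
          (List.forall_prefix_append.mp hpre.2).2 (Step.D :: pre) (by simpa using h)
      obtain ⟨i, hi⟩ := even_pathLen_of_pathAlt_eq_zero hpalt
      obtain ⟨j, hj⟩ := even_pathLen_of_pathAlt_eq_zero hqalt
      simp [Step.len] at hlen
      exact Or.inr ⟨i, j, p, q, by omega, ⟨by omega, hpalt, hppre⟩,
        ⟨by omega, hqalt, hqpre⟩, rfl⟩

-- `p` ends just before the first step of `p ++ D :: q` below the axis.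
lemma append_D_cons_inj {p p' q q' : List Step} {i i' : ℕ}
    (hp : IsSchroeder i p) (hp' : IsSchroeder i' p')
    (h : p ++ Step.D :: q = p' ++ Step.D :: q') : p = p' ∧ q = q' := by
  have key : ∀ {a b c d : List Step} {k : ℕ}, pathAlt a = 0 → IsSchroeder k (a ++ b) →
      Step.D :: c = b ++ Step.D :: d → b = [] := by
    intro a b c d k ha hab hcd
    cases b with
    | nil => rfl
    | cons y b =>
      obtain ⟨rfl, -⟩ := List.cons_eq_cons.mp hcd
      have := hab.2.2 (a ++ [Step.D]) ((List.prefix_append_right_inj a).mpr (by simp))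
      simp [ha, Step.alt] at this
  rcases List.append_eq_append_iff.mp h with ⟨b, rfl, hb⟩ | ⟨b, rfl, hb⟩
  · obtain rfl := key hp.2.1 hp' hb
    simpa [eq_comm] using hb.symm
  · obtain rfl := key hp'.2.1 hp hb
    simpa [eq_comm] using hb

noncomputable def schroederPairs (n : ℕ) :
    Finset (Σ _ : ℕ × ℕ, List Step × List Step) :=
  (antidiagonal n).sigma fun ij => schroederPaths ij.1 ×ˢ schroederPaths ij.2

def upDownJoin (x : Σ _ : ℕ × ℕ, List Step × List Step) : List Step :=
  Step.U :: x.2.1 ++ Step.D :: x.2.2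

lemma mem_schroederPairs {n : ℕ} {x : Σ _ : ℕ × ℕ, List Step × List Step} :
    x ∈ schroederPairs n ↔
      x.1.1 + x.1.2 = n ∧ IsSchroeder x.1.1 x.2.1 ∧ IsSchroeder x.1.2 x.2.2 := by
  simp [schroederPairs]

lemma schroederPaths_succ (n : ℕ) :
    schroederPaths (n + 1) =
      (schroederPaths n).image (Step.F :: ·) ∪ (schroederPairs n).image upDownJoin := by
  ext w
  simp only [mem_union, mem_image, mem_schroederPaths, Sigma.exists, Prod.exists,
    mem_schroederPairs, upDownJoin]
  constructor
  · rintro hw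
    rcases isSchroeder_succ_cases hw with ⟨q, hq, rfl⟩ | ⟨i, j, p, q, hij, hp, hq, rfl⟩
    exacts [Or.inl ⟨q, hq, rfl⟩, Or.inr ⟨i, j, p, q, ⟨hij, hp, hq⟩, rfl⟩]
  · rintro (⟨q, hq, rfl⟩ | ⟨i, j, p, q, ⟨rfl, hp, hq⟩, rfl⟩)
    exacts [isSchroeder_F_cons hq, isSchroeder_U_append_D hp hq]

lemma injOn_upDownJoin (n : ℕ) : Set.InjOn upDownJoin (schroederPairs n) := by
  rintro ⟨⟨i, j⟩, p, q⟩ hx ⟨⟨i', j'⟩, p', q'⟩ hy h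
  simp only [mem_coe, mem_schroederPairs] at hx hy
  simp only [upDownJoin, List.cons_append, List.cons.injEq, true_and] at h
  obtain ⟨rfl, rfl⟩ := append_D_cons_inj hx.2.1 hy.2.1 h
  obtain rfl : i = i' := by have := hx.2.1.1.symm.trans hy.2.1.1; omega
  obtain rfl : j = j' := by omega
  rfl

lemma sum_schroederPaths_succ {M : Type*} [AddCommMonoid M] (f : List Step → M) (n : ℕ) :
    ∑ w ∈ schroederPaths (n + 1), f w =
      ∑ q ∈ schroederPaths n, f (Step.F :: q) +
        ∑ ij ∈ antidiagonal n, ∑ p ∈ schroederPaths ij.1, ∑ q ∈ schroederPaths ij.2,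
          f (Step.U :: p ++ Step.D :: q) := by
  have hdisj : Disjoint ((schroederPaths n).image (Step.F :: ·))
      ((schroederPairs n).image upDownJoin) := by
    simp only [disjoint_left, mem_image, not_exists, not_and]
    rintro _ ⟨q, -, rfl⟩ x - h
    simp [upDownJoin] at h
  rw [schroederPaths_succ, sum_union hdisj,
    sum_image fun _ _ _ _ h => List.cons_injective h, sum_image (injOn_upDownJoin n),
    schroederPairs, sum_sigma]
  simp only [sum_product, upDownJoin]

section GeneratingFunctions

variable {R : Type*} [CommSemiring R]

noncomputable def schroederGF (f : List Step → R) : R⟦X⟧ :=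
  mk fun n => ∑ w ∈ schroederPaths n, f w

noncomputable def schroederGF₂ (f : List Step → List Step → R) : R⟦X⟧ :=
  mk fun n =>
    ∑ ij ∈ antidiagonal n, ∑ p ∈ schroederPaths ij.1, ∑ q ∈ schroederPaths ij.2, f p q

lemma schroederGF_eq (f : List Step → R) :
    schroederGF f = C (f []) + X * schroederGF (fun q => f (Step.F :: q)) +
      X * schroederGF₂ (fun p q => f (Step.U :: p ++ Step.D :: q)) := by
  ext (_ | n)
  · simp [schroederGF, schroederPaths_zero]
  · simp only [map_add, coeff_succ_X_mul, coeff_C, schroederGF, schroederGF₂, coeff_mk,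
      sum_schroederPaths_succ, Nat.succ_ne_zero, if_false, zero_add]

lemma schroederGF_add (f g : List Step → R) :
    schroederGF (fun w => f w + g w) = schroederGF f + schroederGF g := by
  ext n
  simp [schroederGF, sum_add_distrib]

lemma schroederGF₂_add (f g : List Step → List Step → R) :
    schroederGF₂ (fun p q => f p q + g p q) = schroederGF₂ f + schroederGF₂ g := by
  ext n
  simp [schroederGF₂, sum_add_distrib]

lemma schroederGF₂_mul (f g : List Step → R) :
    schroederGF₂ (fun p q => f p * g q) = schroederGF f * schroederGF g := by
  ext n
  simp [schroederGF₂, schroederGF, coeff_mul, sum_mul_sum]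

end GeneratingFunctions

@[simp] lemma ascents_nil : ascents [] = 0 := rfl

lemma ascents_cons (x : Step) (l : List Step) :
    ascents (x :: l) = ascents l + if x = Step.U ∧ l.head? ≠ some Step.U then 1 else 0 := by
  rw [ascents, List.length_cons, List.range_succ_eq_map, List.countP_cons, List.countP_map]
  congr 1
  cases l <;> simp

lemma ascents_append {p q : List Step} (hq : q.head? ≠ some Step.U) :
    ascents (p ++ q) = ascents p + ascents q := by
  induction p with
  | nil => simp
  | cons x p ih =>
    rw [List.cons_append, ascents_cons, ih, ascents_cons]
    cases p <;> simp [hq] <;> ring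

lemma ascents_F_cons (q : List Step) : ascents (Step.F :: q) = ascents q := by
  simp [ascents_cons]

lemma ascents_U_append_D (p q : List Step) :
    ascents (Step.U :: p ++ Step.D :: q) =
      (if p.head? = some Step.U then 0 else 1) + ascents p + ascents q := by
  rw [List.cons_append, ascents_cons, ascents_append (by simp), ascents_cons]
  cases p <;> simp <;> ring

noncomputable def schroederNumberGF : ℚ⟦X⟧ := schroederGF fun _ => 1

noncomputable def notUpFirstGF : ℚ⟦X⟧ :=
  schroederGF fun w => if w.head? = some Step.U then 0 else 1

noncomputable def ascentGF : ℚ⟦X⟧ := schroederGF fun w => (ascents w : ℚ)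

lemma schroederNumberGF_eq :
    schroederNumberGF = 1 + X * schroederNumberGF + X * schroederNumberGF ^ 2 := by
  have hmul : schroederGF₂ (fun _ _ => (1 : ℚ)) = schroederNumberGF * schroederNumberGF := by
    simpa [schroederNumberGF] using schroederGF₂_mul (R := ℚ) (fun _ => 1) (fun _ => 1)
  conv_lhs => rw [schroederNumberGF, schroederGF_eq]
  rw [hmul, map_one, sq]
  rfl

lemma notUpFirstGF_eq : notUpFirstGF = 1 + X * schroederNumberGF := by
  have hU : schroederGF₂ (fun p q =>
      if (Step.U :: p ++ Step.D :: q).head? = some Step.U then (0 : ℚ) else 1) = 0 := by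
    ext n
    simp [schroederGF₂]
  rw [notUpFirstGF, schroederGF_eq, hU]
  simp [schroederNumberGF]

lemma ascentGF_eq : ascentGF = X * ascentGF +
    X * ((notUpFirstGF + ascentGF) * schroederNumberGF + schroederNumberGF * ascentGF) := by
  have hsplit : (fun p q => (ascents (Step.U :: p ++ Step.D :: q) : ℚ)) =
      fun p q => ((if p.head? = some Step.U then 0 else 1) + (ascents p : ℚ)) * 1 +
        1 * (ascents q : ℚ) := by
    ext p q
    rw [ascents_U_append_D]
    push_cast
    ring
  conv_lhs => rw [ascentGF, schroederGF_eq, hsplit, schroederGF₂_add, schroederGF₂_mul,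
    schroederGF₂_mul, schroederGF_add]
  simp only [ascents_F_cons, ascents_nil, Nat.cast_zero, map_zero, zero_add]
  rfl

lemma sqrt_discriminant_eq {r s : ℚ⟦X⟧} (hr : r = 1 + X * r + X * r ^ 2)
    (hs : s ^ 2 = 1 - 6 * X + X ^ 2) (hs0 : constantCoeff s = 1) :
    s = 1 - X - 2 * X * r := by
  have hsq : s ^ 2 = (1 - X - 2 * X * r) ^ 2 := by linear_combination hs + 4 * X * hr
  rcases sq_eq_sq_iff_eq_or_eq_neg.mp hsq with h | h
  · exact h
  · have := congrArg constantCoeff h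
    norm_num [hs0] at this

lemma ascentGF_add_two {s D : ℚ⟦X⟧} (hs : s ^ 2 = 1 - 6 * X + X ^ 2)
    (hs0 : constantCoeff s = 1) (hD : 2 * s * D = X ^ 2 - 5 * X + 2) :
    ascentGF + 2 = D + C (1 / 2 : ℚ) * (X + 2) := by
  have hsr := sqrt_discriminant_eq schroederNumberGF_eq hs hs0
  have hsA : 2 * s * ascentGF = X ^ 2 - 5 * X + 2 - (2 - X) * s := by
    rw [hsr]
    linear_combination 2 * ascentGF_eq + 2 * X * schroederNumberGF * notUpFirstGF_eq -
      2 * X * schroederNumberGF_eq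
  have hC : (2 : ℚ⟦X⟧) * C (1 / 2 : ℚ) = 1 := by
    rw [← map_ofNat C 2, ← map_mul]
    norm_num
  have hs_ne : s ≠ 0 := fun h => by simp [h] at hs0
  refine mul_left_cancel₀ hs_ne ?_
  linear_combination C (1 / 2 : ℚ) * (hsA - hD) - (2 * s + s * ascentGF - s * D) * hC

lemma totalAscents_eq_coeff_ascentGF (n : ℕ) : (totalAscents n : ℚ) = coeff n ascentGF := by
  rw [totalAscents, ← (setOf_isSchroeder_finite n).coe_toFinset, finsum_mem_coe_finset]
  simp [ascentGF, schroederGF, schroederPaths]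

theorem stmt12 (s D : PowerSeries ℚ)
    (hs : s ^ 2 = 1 - 6 * X + X ^ 2)
    (hs0 : constantCoeff s = 1)
    (hD : 2 * s * D = X ^ 2 - 5 * X + 2) :
    ∀ n : ℕ, 1 ≤ n →
      (totalAscents n : ℚ) =
        coeff n D + coeff n (PowerSeries.C (1 / 2 : ℚ) * (X + 2)) := by
  intro n hn
  have hcoeff := congrArg (coeff n) (ascentGF_add_two hs hs0 hD)
  have htwo : coeff n (2 : ℚ⟦X⟧) = 0 := by
    rw [← map_ofNat C 2, coeff_C, if_neg (by omega)]
  rw [map_add, map_add, htwo, add_zero] at hcoeff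
  rw [totalAscents_eq_coeff_ascentGF, hcoeff]
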